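/- Under the hypotheses of the main identifiability lemma (X = f(S,T) with f injective, S ⊥ T, S' = E(X) with S' ⊥ T, and X = D(S',T)), one has H(S') ≤ H(S). -/
import Mathlib


open MeasureTheory ProbabilityTheory

/-- Shannon entropy of a random variable with finite range. -/
noncomputable def entropy {Ω : Type*} [MeasurableSpace Ω] (μ : Measure Ω)
    {α : Type*} [Fintype α] (X : Ω → α) : ℝ :=
  ∑ a : α, Real.negMulLog (μ (X ⁻¹' {a})).toReal

/-- Conditional Shannon entropy H(X | Y) = H(X,Y) - H(Y). -/
noncomputable def condEntropy {Ω : Type*} [MeasurableSpace Ω] (μ : Measure Ω)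
    {α β : Type*} [Fintype α] [Fintype β] (X : Ω → α) (Y : Ω → β) : ℝ :=
  entropy μ (fun ω => (X ω, Y ω)) - entropy μ Y

/-- Mutual information I(X;Y) = H(X) - H(X|Y). -/
noncomputable def mutualInfo {Ω : Type*} [MeasurableSpace Ω] (μ : Measure Ω)
    {α β : Type*} [Fintype α] [Fintype β] (X : Ω → α) (Y : Ω → β) : ℝ :=
  entropy μ X - condEntropy μ X Y

lemma negMulLog_add_le {x y : ℝ} (hx : 0 ≤ x) (hy : 0 ≤ y) :
    Real.negMulLog (x + y) ≤ Real.negMulLog x + Real.negMulLog y := by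
  rcases eq_or_lt_of_le hx with h | hx'
  · simp [← h]
  rcases eq_or_lt_of_le hy with h | hy'
  · simp [← h]
  have h1 : Real.log x ≤ Real.log (x + y) := Real.log_le_log hx' (by linarith)
  have h2 : Real.log y ≤ Real.log (x + y) := Real.log_le_log hy' (by linarith)
  simp only [Real.negMulLog, neg_mul]
  nlinarith

lemma negMulLog_sum_le {ι : Type*} (s : Finset ι) (p : ι → ℝ) (hp : ∀ i, 0 ≤ p i) :
    Real.negMulLog (∑ i ∈ s, p i) ≤ ∑ i ∈ s, Real.negMulLog (p i) := by
  classical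
  induction s using Finset.induction_on with
  | empty => simp
  | @insert a s hx ih =>
    rw [Finset.sum_insert hx, Finset.sum_insert hx]
    calc Real.negMulLog (p a + ∑ i ∈ s, p i)
        ≤ Real.negMulLog (p a) + Real.negMulLog (∑ i ∈ s, p i) :=
          negMulLog_add_le (hp a) (Finset.sum_nonneg fun i _ => hp i)
      _ ≤ Real.negMulLog (p a) + ∑ i ∈ s, Real.negMulLog (p i) := by linarith

lemma sum_preimage_toReal_eq_one {Ω : Type*} [MeasurableSpace Ω] (μ : Measure Ω)
    [IsProbabilityMeasure μ] {α : Type*} [Fintype α] [MeasurableSpace α]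
    [MeasurableSingletonClass α] {Y : Ω → α} (hY : Measurable Y) :
    ∑ a : α, (μ (Y ⁻¹' {a})).toReal = 1 := by
  classical
  have h : ∑ a : α, μ (Y ⁻¹' {a}) = μ Set.univ := by
    rw [← measure_biUnion_finset]
    · congr 1; ext ω; simp
    · intro a _ b _ hab
      simp only [Function.onFun, Set.disjoint_left, Set.mem_preimage, Set.mem_singleton_iff]
      intro ω h1 h2; exact hab (h1 ▸ h2 ▸ rfl)
    · exact fun a _ => hY (measurableSet_singleton a)
  rw [← ENNReal.toReal_sum (fun a _ => measure_ne_top μ _), h, measure_univ, ENNReal.toReal_one]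

lemma entropy_pair_of_indep {Ω : Type*} [MeasurableSpace Ω] (μ : Measure Ω)
    [IsProbabilityMeasure μ] {α β : Type*} [Fintype α] [Fintype β]
    [MeasurableSpace α] [MeasurableSingletonClass α]
    [MeasurableSpace β] [MeasurableSingletonClass β]
    {A : Ω → α} {B : Ω → β} (hA : Measurable A) (hB : Measurable B)
    (h : IndepFun A B μ) :
    entropy μ (fun ω => (A ω, B ω)) = entropy μ A + entropy μ B := by
  classical
  have key : ∀ a b, (μ ((fun ω => (A ω, B ω)) ⁻¹' {(a, b)})).toReal
      = (μ (A ⁻¹' {a})).toReal * (μ (B ⁻¹' {b})).toReal := by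
    intro a b
    have hset : (fun ω => (A ω, B ω)) ⁻¹' {(a, b)} = A ⁻¹' {a} ∩ B ⁻¹' {b} := by
      ext ω; simp [Prod.ext_iff]
    rw [hset, h.measure_inter_preimage_eq_mul _ _ (measurableSet_singleton a)
      (measurableSet_singleton b), ENNReal.toReal_mul]
  unfold entropy
  rw [Fintype.sum_prod_type]
  have : ∀ a : α, ∑ b : β, Real.negMulLog (μ ((fun ω => (A ω, B ω)) ⁻¹' {(a, b)})).toReal
      = Real.negMulLog (μ (A ⁻¹' {a})).toReal
        + (μ (A ⁻¹' {a})).toReal * ∑ b : β, Real.negMulLog (μ (B ⁻¹' {b})).toReal := by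
    intro a
    simp only [key, Real.negMulLog_mul]
    rw [Finset.sum_add_distrib, ← Finset.sum_mul, ← Finset.mul_sum,
      sum_preimage_toReal_eq_one μ hB]
    ring
  simp only [this]
  rw [Finset.sum_add_distrib, ← Finset.sum_mul, sum_preimage_toReal_eq_one μ hA]
  ring

lemma entropy_comp_inj {Ω : Type*} [MeasurableSpace Ω] (μ : Measure Ω)
    {β γ : Type*} [Fintype β] [Fintype γ]
    (W : Ω → β) {g : β → γ} (hg : Function.Injective g) :
    entropy μ (fun ω => g (W ω)) = entropy μ W := by
  classical
  unfold entropy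
  rw [← Finset.sum_subset (Finset.subset_univ (Finset.univ.image g))]
  · rw [Finset.sum_image (fun a _ b _ hab => hg hab)]
    refine Finset.sum_congr rfl fun b _ => ?_
    have : (fun ω => g (W ω)) ⁻¹' {g b} = W ⁻¹' {b} := by
      ext ω; simp [hg.eq_iff]
    rw [this]
  · intro c _ hc
    have : (fun ω => g (W ω)) ⁻¹' {c} = ∅ := by
      ext ω
      simp only [Set.mem_preimage, Set.mem_singleton_iff, Set.mem_empty_iff_false, iff_false]
      intro hgc
      exact hc (Finset.mem_image.2 ⟨W ω, Finset.mem_univ _, hgc⟩)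
    simp [this]

lemma entropy_comp_le {Ω : Type*} [MeasurableSpace Ω] (μ : Measure Ω)
    [IsProbabilityMeasure μ] {β γ : Type*} [Fintype β] [Fintype γ]
    (W : Ω → β) (hW : ∀ b : β, MeasurableSet (W ⁻¹' {b})) (g : β → γ) :
    entropy μ (fun ω => g (W ω)) ≤ entropy μ W := by
  classical
  unfold entropy
  have key : ∀ c : γ, (μ ((fun ω => g (W ω)) ⁻¹' {c})).toReal
      = ∑ b ∈ Finset.univ.filter (fun b => g b = c), (μ (W ⁻¹' {b})).toReal := by
    intro c
    have hset : (fun ω => g (W ω)) ⁻¹' {c}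
        = ⋃ b ∈ Finset.univ.filter (fun b => g b = c), W ⁻¹' {b} := by
      ext ω; simp
    rw [hset, measure_biUnion_finset ?_ (fun b _ => hW b),
      ENNReal.toReal_sum (fun b _ => measure_ne_top μ _)]
    intro a _ b _ hab
    simp only [Function.onFun, Set.disjoint_left, Set.mem_preimage, Set.mem_singleton_iff]
    intro ω h1 h2; exact hab (h1 ▸ h2 ▸ rfl)
  calc ∑ c : γ, Real.negMulLog (μ ((fun ω => g (W ω)) ⁻¹' {c})).toReal
      ≤ ∑ c : γ, ∑ b ∈ Finset.univ.filter (fun b => g b = c),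
          Real.negMulLog (μ (W ⁻¹' {b})).toReal := by
        refine Finset.sum_le_sum fun c _ => ?_
        rw [key c]
        exact negMulLog_sum_le _ _ fun b => ENNReal.toReal_nonneg
    _ = ∑ b : β, Real.negMulLog (μ (W ⁻¹' {b})).toReal :=
        Finset.sum_fiberwise Finset.univ g _

set_option maxHeartbeats 1000000 in
theorem stmt_9 {Ω : Type*} [MeasurableSpace Ω] (μ : Measure Ω) [IsProbabilityMeasure μ]
    {𝒮 𝒯 𝒳 𝒮' : Type*} [Fintype 𝒮] [Fintype 𝒯] [Fintype 𝒳] [Fintype 𝒮']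
    [MeasurableSpace 𝒮] [MeasurableSingletonClass 𝒮]
    [MeasurableSpace 𝒯] [MeasurableSingletonClass 𝒯]
    [MeasurableSpace 𝒮'] [MeasurableSingletonClass 𝒮']
    (S : Ω → 𝒮) (T : Ω → 𝒯) (hS : Measurable S) (hT : Measurable T)
    (f : 𝒮 × 𝒯 → 𝒳) (hf : Function.Injective f)
    (X : Ω → 𝒳) (hX : ∀ ω, X ω = f (S ω, T ω))
    (hST : IndepFun S T μ)
    (E : 𝒳 → 𝒮') (S' : Ω → 𝒮') (hS' : ∀ ω, S' ω = E (X ω))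
    (hS'T : IndepFun S' T μ)
    (D : 𝒮' × 𝒯 → 𝒳) (hD : ∀ᵐ ω ∂μ, D (S' ω, T ω) = X ω) :
    entropy μ S' ≤ entropy μ S := by
  classical
  have hΩ : Nonempty Ω := by
    by_contra h
    rw [not_nonempty_iff] at h
    have h1 : μ Set.univ = 1 := measure_univ
    rw [Set.univ_eq_empty_iff.2 h, measure_empty] at h1
    exact zero_ne_one h1
  obtain ⟨ω0⟩ := hΩ
  haveI hne : Nonempty (𝒮 × 𝒯) := ⟨(S ω0, T ω0)⟩
  have hSTm : Measurable (fun ω => (S ω, T ω)) := hS.prodMk hT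
  have hXpre : ∀ x : 𝒳, MeasurableSet (X ⁻¹' {x}) := by
    intro x
    have : X ⁻¹' {x} = (fun ω => (S ω, T ω)) ⁻¹' (f ⁻¹' {x}) := by
      ext ω; simp [hX]
    rw [this]
    exact hSTm ((Set.toFinite _).measurableSet)
  have hS'm : Measurable S' := by
    have : S' = (fun p : 𝒮 × 𝒯 => E (f p)) ∘ (fun ω => (S ω, T ω)) := by
      funext ω; simp [hS', hX]
    rw [this]
    exact (measurable_of_countable _).comp hSTm
  have h1 : entropy μ X = entropy μ (fun ω => (S ω, T ω)) := by
    rw [show X = (fun ω => f ((fun ω' => (S ω', T ω')) ω)) from funext hX]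
    exact entropy_comp_inj μ _ hf
  have h2 : entropy μ (fun ω => (S ω, T ω)) = entropy μ S + entropy μ T :=
    entropy_pair_of_indep μ hS hT hST
  have hcomp : (fun ω => (S' ω, T ω))
      = fun ω => (fun x => (E x, (Function.invFun f x).2)) (X ω) := by
    funext ω
    have hinv : Function.invFun f (X ω) = (S ω, T ω) := by
      rw [hX ω]; exact Function.leftInverse_invFun hf (S ω, T ω)
    simp [hS', hinv]
  have h3 : entropy μ (fun ω => (S' ω, T ω)) ≤ entropy μ X := by
    rw [hcomp]
    exact entropy_comp_le μ X hXpre (fun x => (E x, (Function.invFun f x).2))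
  have h4 : entropy μ (fun ω => (S' ω, T ω)) = entropy μ S' + entropy μ T :=
    entropy_pair_of_indep μ hS'm hT hS'T
  linarith
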